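/- arXiv:1704.02171 — 2 statements merged into one kernel-verified Lean document; each statement's English description precedes it below -/
import Mathlib

section
/- Let β ∈ [0, 2/√3]. Then for all integers k_1, k_2 ≥ 1 one has Re ω_{k_1 k_2} ≥ γ(β)·√(k_1²+k_2²). -/
open Real

/-- The real (signed) cube root. -/
noncomputable def cbrt (x : ℝ) : ℝ := Real.sign x * |x| ^ ((1 : ℝ) / 3)

/-- `s = √(k₁² + k₂²)`. -/
noncomputable def sNorm (k₁ k₂ : ℕ) : ℝ := Real.sqrt ((k₁ : ℝ) ^ 2 + (k₂ : ℝ) ^ 2)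

/-- `Ψ_{k₁k₂}(β) = (3√3/8)·β³/s³`. -/
noncomputable def Psi (β : ℝ) (k₁ k₂ : ℕ) : ℝ :=
  (3 * Real.sqrt 3 / 8) * β ^ 3 / (sNorm k₁ k₂) ^ 3

/-- `Φ_{k₁k₂}(β) = √(1 − (9/4)β²/s² + (27/16)β⁴/s⁴)`. -/
noncomputable def Phi (β : ℝ) (k₁ k₂ : ℕ) : ℝ :=
  Real.sqrt (1 - (9 / 4) * β ^ 2 / (sNorm k₁ k₂) ^ 2 + (27 / 16) * β ^ 4 / (sNorm k₁ k₂) ^ 4)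

/-- `Λ⁺_{k₁k₂}(β) = (1/2)·∛(Φ + Ψ)`. -/
noncomputable def LamP (β : ℝ) (k₁ k₂ : ℕ) : ℝ := (1 / 2) * cbrt (Phi β k₁ k₂ + Psi β k₁ k₂)

/-- `Λ⁻_{k₁k₂}(β) = (1/2)·∛(Φ − Ψ)`. -/
noncomputable def LamM (β : ℝ) (k₁ k₂ : ℕ) : ℝ := (1 / 2) * cbrt (Phi β k₁ k₂ - Psi β k₁ k₂)

/-- `Re ω_{k₁k₂} = s·(Λ⁺ + Λ⁻)`. -/
noncomputable def ReOmega (β : ℝ) (k₁ k₂ : ℕ) : ℝ := sNorm k₁ k₂ * (LamP β k₁ k₂ + LamM β k₁ k₂)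

/-- `Im ω_{k₁k₂} = (1/√3)·s·(Λ⁻ − Λ⁺) + β/2`. -/
noncomputable def ImOmega (β : ℝ) (k₁ k₂ : ℕ) : ℝ :=
  (1 / Real.sqrt 3) * sNorm k₁ k₂ * (LamM β k₁ k₂ - LamP β k₁ k₂) + β / 2

/-- The gap constant `γ(β)`. -/
noncomputable def gam (β : ℝ) : ℝ :=
  ((Real.sqrt 2 - 1) / 2) *
    (cbrt (Real.sqrt (1 - (9 / 8) * β ^ 2 + (27 / 64) * β ^ 4)
        + (3 * Real.sqrt 3 / (16 * Real.sqrt 2)) * β ^ 3)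
      + cbrt (Real.sqrt (1 - (9 / 8) * β ^ 2 + (27 / 64) * β ^ 4)
        - (3 * Real.sqrt 3 / (16 * Real.sqrt 2)) * β ^ 3))

lemma cbrt_of_nonneg {x : ℝ} (hx : 0 ≤ x) : cbrt x = x ^ ((1:ℝ)/3) := by
  rcases eq_or_lt_of_le hx with h | h
  · simp [cbrt, ← h, Real.zero_rpow (by norm_num : (1:ℝ)/3 ≠ 0)]
  · rw [cbrt, Real.sign_of_pos h, abs_of_pos h, one_mul]

lemma cbrt_nonneg {x : ℝ} (hx : 0 ≤ x) : 0 ≤ cbrt x := by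
  rw [cbrt_of_nonneg hx]; positivity

lemma cbrt_le_cbrt {x y : ℝ} (hx : 0 ≤ x) (hxy : x ≤ y) : cbrt x ≤ cbrt y := by
  rw [cbrt_of_nonneg hx, cbrt_of_nonneg (hx.trans hxy)]
  exact Real.rpow_le_rpow hx hxy (by norm_num)

lemma cbrt_cube {p : ℝ} (hp : 0 ≤ p) : cbrt (p ^ 3) = p := by
  rw [cbrt_of_nonneg (pow_nonneg hp 3), ← Real.rpow_natCast p 3, ← Real.rpow_mul hp]
  norm_num

lemma cbrt_one : cbrt 1 = 1 := by
  have := cbrt_cube (p := 1) zero_le_one; simpa using this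

lemma key_ineq {q : ℝ} (h0 : 0 ≤ q) (h1 : q ≤ 1/2) :
    (1-q)^3 + 2 * Real.sqrt (q^3) ≤ 1 := by
  have hr : Real.sqrt q ^ 2 = q := Real.sq_sqrt h0
  have hrn : 0 ≤ Real.sqrt q := Real.sqrt_nonneg q
  have hsc : Real.sqrt (q^3) = (Real.sqrt q)^3 := by
    have h2 : ((Real.sqrt q)^3)^2 = q^3 := by
      rw [show ((Real.sqrt q)^3)^2 = (Real.sqrt q ^ 2)^3 by ring, hr]
    rw [← h2, Real.sqrt_sq (pow_nonneg hrn 3)]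
  have main : ∀ r : ℝ, 0 ≤ r → r^2 ≤ 1/2 → (1-r^2)^3 + 2*r^3 ≤ 1 := by
    intro r hA hB
    have h34 : r ≤ 3/4 := by nlinarith [sq_nonneg (r - 3/4)]
    have h4 : (0:ℝ) ≤ r^4 := by positivity
    have hpos : 0 ≤ 3 - 2*r - 3*r^2 + r^4 := by linarith
    nlinarith [mul_nonneg (sq_nonneg r) hpos]
  calc (1-q)^3 + 2 * Real.sqrt (q^3)
      = (1 - (Real.sqrt q)^2)^3 + 2*(Real.sqrt q)^3 := by rw [hsc, hr]
    _ ≤ 1 := main _ hrn (by rw [hr]; exact h1)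

lemma phi_add {q : ℝ} (h0 : 0 ≤ q) (h1 : q ≤ 1/2) :
    Real.sqrt ((1-q)^3 + q^3) + Real.sqrt (q^3) ≤ 1 := by
  have ha0 : 0 ≤ Real.sqrt (q^3) := Real.sqrt_nonneg _
  have ha2 : Real.sqrt (q^3) ^ 2 = q^3 := Real.sq_sqrt (pow_nonneg h0 3)
  have hP0 : 0 ≤ (1-q)^3 := pow_nonneg (by linarith) 3
  have hkey := key_ineq h0 h1
  have h1a : 0 ≤ 1 - Real.sqrt (q^3) := by linarith
  have hle : (1-q)^3 + q^3 ≤ (1 - Real.sqrt (q^3))^2 := by nlinarith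
  have := Real.sqrt_le_sqrt hle
  rw [Real.sqrt_sq h1a] at this
  linarith

lemma phi_sub {q : ℝ} (h0 : 0 ≤ q) (h1 : q ≤ 1/2) :
    (1-q)^3 ≤ Real.sqrt ((1-q)^3 + q^3) - Real.sqrt (q^3) := by
  have ha0 : 0 ≤ Real.sqrt (q^3) := Real.sqrt_nonneg _
  have ha2 : Real.sqrt (q^3) ^ 2 = q^3 := Real.sq_sqrt (pow_nonneg h0 3)
  have hP0 : 0 ≤ (1-q)^3 := pow_nonneg (by linarith) 3
  have hkey := key_ineq h0 h1
  have hsq : ((1-q)^3 + Real.sqrt (q^3))^2 ≤ (1-q)^3 + q^3 := by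
    nlinarith [mul_le_mul_of_nonneg_left hkey hP0, mul_nonneg hP0 ha0]
  have := Real.sqrt_le_sqrt hsq
  rw [Real.sqrt_sq (by linarith : 0 ≤ (1-q)^3 + Real.sqrt (q^3))] at this
  linarith


set_option maxHeartbeats 1000000 in
/-- lower bound for `Re ω_{k₁k₂}` when `β ∈ [0, 2/√3]`. -/
theorem stmt_2 (β : ℝ) (hβ0 : 0 ≤ β) (hβ : β ≤ 2 / Real.sqrt 3) :
    ∀ k₁ k₂ : ℕ, 1 ≤ k₁ → 1 ≤ k₂ →
      ReOmega β k₁ k₂ ≥ gam β * sNorm k₁ k₂ := by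
  have h3 : Real.sqrt 3 ^ 2 = 3 := Real.sq_sqrt (by norm_num)
  have h3pos : (0:ℝ) < Real.sqrt 3 := Real.sqrt_pos.mpr (by norm_num)
  have h2 : Real.sqrt 2 ^ 2 = 2 := Real.sq_sqrt (by norm_num)
  have h2pos : (0:ℝ) < Real.sqrt 2 := Real.sqrt_pos.mpr (by norm_num)
  have hb2 : β^2 ≤ 4/3 := by
    have hb3 : β * Real.sqrt 3 ≤ 2 := (le_div_iff₀ h3pos).mp hβ
    nlinarith [mul_nonneg hβ0 h3pos.le]
  -- gam bound
  have hgam : gam β ≤ 1/2 := by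
    obtain ⟨q₀, hq₀⟩ : ∃ q₀ : ℝ, q₀ = (3/8) * β^2 := ⟨_, rfl⟩
    have hq00 : 0 ≤ q₀ := by rw [hq₀]; positivity
    have hq012 : q₀ ≤ 1/2 := by rw [hq₀]; linarith
    have hΦ₀ : Real.sqrt (1 - (9/8)*β^2 + (27/64)*β^4) = Real.sqrt ((1-q₀)^3 + q₀^3) := by
      congr 1; rw [hq₀]; ring
    have hΨnn : 0 ≤ (3 * Real.sqrt 3 / (16 * Real.sqrt 2)) * β ^ 3 :=
      mul_nonneg (by positivity) (pow_nonneg hβ0 3)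
    have hΨ₀ : (3 * Real.sqrt 3 / (16 * Real.sqrt 2)) * β ^ 3 = Real.sqrt (q₀^3) := by
      have e2 : ((3 * Real.sqrt 3 / (16 * Real.sqrt 2)) * β ^ 3)^2 = q₀^3 := by
        rw [show ((3 * Real.sqrt 3 / (16 * Real.sqrt 2)) * β ^ 3)^2
          = (9 * Real.sqrt 3 ^ 2) / (256 * Real.sqrt 2 ^ 2) * β^6 by ring, h3, h2, hq₀]
        ring
      rw [← e2, Real.sqrt_sq hΨnn]
    have k1 := phi_add hq00 hq012
    have k2 := phi_sub hq00 hq012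
    have hP0 : (0:ℝ) ≤ (1-q₀)^3 := pow_nonneg (by linarith) 3
    have hs0 : 0 ≤ Real.sqrt (q₀^3) := Real.sqrt_nonneg _
    have hA : cbrt (Real.sqrt (1 - (9/8)*β^2 + (27/64)*β^4)
        + (3 * Real.sqrt 3 / (16 * Real.sqrt 2)) * β ^ 3) ≤ 1 := by
      rw [hΦ₀, hΨ₀]
      calc cbrt (Real.sqrt ((1-q₀)^3 + q₀^3) + Real.sqrt (q₀^3)) ≤ cbrt 1 :=
            cbrt_le_cbrt (by positivity) k1
        _ = 1 := cbrt_one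
    have hB : cbrt (Real.sqrt (1 - (9/8)*β^2 + (27/64)*β^4)
        - (3 * Real.sqrt 3 / (16 * Real.sqrt 2)) * β ^ 3) ≤ 1 := by
      rw [hΦ₀, hΨ₀]
      calc cbrt (Real.sqrt ((1-q₀)^3 + q₀^3) - Real.sqrt (q₀^3)) ≤ cbrt 1 :=
            cbrt_le_cbrt (by linarith) (by linarith)
        _ = 1 := cbrt_one
    have hAnn : 0 ≤ cbrt (Real.sqrt (1 - (9/8)*β^2 + (27/64)*β^4)
        + (3 * Real.sqrt 3 / (16 * Real.sqrt 2)) * β ^ 3) := by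
      rw [hΦ₀, hΨ₀]; exact cbrt_nonneg (by positivity)
    have hBnn : 0 ≤ cbrt (Real.sqrt (1 - (9/8)*β^2 + (27/64)*β^4)
        - (3 * Real.sqrt 3 / (16 * Real.sqrt 2)) * β ^ 3) := by
      rw [hΦ₀, hΨ₀]; exact cbrt_nonneg (by linarith)
    have h2ge1 : (1:ℝ) ≤ Real.sqrt 2 := by nlinarith
    have hsqrt2 : Real.sqrt 2 ≤ 3/2 := by nlinarith
    have hc : (0:ℝ) ≤ (Real.sqrt 2 - 1)/2 := by linarith
    rw [gam]
    linarith [mul_nonneg hc (sub_nonneg.mpr hA), mul_nonneg hc (sub_nonneg.mpr hB), hsqrt2]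
  -- main part
  intro k₁ k₂ hk₁ hk₂
  have hk1 : (1:ℝ) ≤ (k₁:ℝ) := by exact_mod_cast hk₁
  have hk2 : (1:ℝ) ≤ (k₂:ℝ) := by exact_mod_cast hk₂
  have hs2 : sNorm k₁ k₂ ^ 2 = (k₁:ℝ)^2 + (k₂:ℝ)^2 := Real.sq_sqrt (by positivity)
  have hs2ge : 2 ≤ sNorm k₁ k₂ ^ 2 := by rw [hs2]; nlinarith
  have hsnn : 0 ≤ sNorm k₁ k₂ := Real.sqrt_nonneg _
  have hspos : 0 < sNorm k₁ k₂ := by nlinarith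
  obtain ⟨q, hq⟩ : ∃ q : ℝ, q = (3/4) * β^2 / sNorm k₁ k₂ ^ 2 := ⟨_, rfl⟩
  have hq0 : 0 ≤ q := by rw [hq]; positivity
  have hq12 : q ≤ 1/2 := by
    rw [hq, div_le_iff₀ (by positivity : (0:ℝ) < sNorm k₁ k₂ ^ 2)]
    linarith
  have hPsinn : 0 ≤ Psi β k₁ k₂ := by
    rw [Psi]
    exact div_nonneg (mul_nonneg (by positivity) (pow_nonneg hβ0 3)) (by positivity)
  have hPsi : Psi β k₁ k₂ = Real.sqrt (q^3) := by
    have e2 : (Psi β k₁ k₂)^2 = q^3 := by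
      rw [Psi, hq, show ((3 * Real.sqrt 3 / 8) * β ^ 3 / sNorm k₁ k₂ ^ 3)^2
        = (9 * Real.sqrt 3 ^ 2 / 64) * β^6 / sNorm k₁ k₂ ^ 6 by ring, h3]
      ring
    rw [← e2, Real.sqrt_sq hPsinn]
  have hPhi : Phi β k₁ k₂ = Real.sqrt ((1-q)^3 + q^3) := by
    rw [Phi]; congr 1
    have hne : sNorm k₁ k₂ ≠ 0 := ne_of_gt hspos
    rw [hq]; field_simp; ring
  have k1' := phi_add hq0 hq12
  have k2' := phi_sub hq0 hq12
  have hP0 : (0:ℝ) ≤ (1-q)^3 := pow_nonneg (by linarith) 3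
  have hv : 1 - q ≤ cbrt (Phi β k₁ k₂ - Psi β k₁ k₂) := by
    have hle : (1-q)^3 ≤ Phi β k₁ k₂ - Psi β k₁ k₂ := by rw [hPhi, hPsi]; exact k2'
    calc 1 - q = cbrt ((1-q)^3) := (cbrt_cube (by linarith)).symm
      _ ≤ _ := cbrt_le_cbrt hP0 hle
  have hsub_nn : 0 ≤ Phi β k₁ k₂ - Psi β k₁ k₂ := by
    rw [hPhi, hPsi]; linarith
  have hu : cbrt (Phi β k₁ k₂ - Psi β k₁ k₂) ≤ cbrt (Phi β k₁ k₂ + Psi β k₁ k₂) :=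
    cbrt_le_cbrt hsub_nn (by linarith)
  have hL : 1/2 ≤ LamP β k₁ k₂ + LamM β k₁ k₂ := by
    rw [LamP, LamM]; linarith
  rw [ge_iff_le, ReOmega]
  calc gam β * sNorm k₁ k₂ ≤ (1/2) * sNorm k₁ k₂ :=
        mul_le_mul_of_nonneg_right hgam hsnn
    _ ≤ sNorm k₁ k₂ * (LamP β k₁ k₂ + LamM β k₁ k₂) := by
        have := mul_le_mul_of_nonneg_right hL hsnn; linarith
end

section
/- Let β ∈ [0, 2/√3]. Then for all integers k_1, k_2 ≥ 1 one has Λ⁺_{k_1k_2}(β) + Λ⁻_{k_1k_2}(β) ≥ Λ⁺_{11}(β) + Λ⁻_{11}(β) > 0; moreover, for all integers k_1, k_2, k_1', k_2' ≥ 1 with k_1'² + k_2'² ≤ k_1² + k_2² one has Λ⁺_{k_1k_2}(β) + Λ⁻_{k_1k_2}(β) ≥ Λ⁺_{k_1'k_2'}(β) + Λ⁻_{k_1'k_2'}(β). -/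
open Real

lemma cbrt_of_pos {x : ℝ} (hx : 0 < x) : cbrt x = x ^ ((1:ℝ)/3) := by
  unfold cbrt
  rw [Real.sign_of_pos hx, abs_of_pos hx, one_mul]

lemma cbrt_pos {x : ℝ} (hx : 0 < x) : 0 < cbrt x := by
  rw [cbrt_of_pos hx]; exact Real.rpow_pos_of_pos hx _

lemma cbrt_cube_s7 {x : ℝ} (hx : 0 < x) : (cbrt x)^3 = x := by
  rw [cbrt_of_pos hx, ← Real.rpow_natCast (x ^ ((1:ℝ)/3)) 3, ← Real.rpow_mul hx.le]
  norm_num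

/-- Abstract facts about `u = ∛(φ+ψ) + ∛(φ−ψ)` when `(φ+ψ)(φ−ψ) = p³`. -/
lemma cubic_facts (p ψ φ : ℝ) (hp : 0 < p) (hψ0 : 0 ≤ ψ) (hφpos : 0 < φ)
    (hab : (φ+ψ)*(φ-ψ) = p^3) :
    0 < cbrt (φ+ψ) + cbrt (φ-ψ) ∧
    (cbrt (φ+ψ) + cbrt (φ-ψ))^3 = 2*φ + 3*p*(cbrt (φ+ψ) + cbrt (φ-ψ)) ∧
    4*p ≤ (cbrt (φ+ψ) + cbrt (φ-ψ))^2 := by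
  have ha : 0 < φ + ψ := by linarith
  have hb : 0 < φ - ψ := by
    by_contra h
    push_neg at h
    nlinarith [pow_pos hp 3, mul_nonpos_of_nonneg_of_nonpos ha.le h]
  have hcpos : 0 < cbrt (φ+ψ) := cbrt_pos ha
  have hdpos : 0 < cbrt (φ-ψ) := cbrt_pos hb
  have hc3 : (cbrt (φ+ψ))^3 = φ + ψ := cbrt_cube_s7 ha
  have hd3 : (cbrt (φ-ψ))^3 = φ - ψ := cbrt_cube_s7 hb
  set c := cbrt (φ+ψ)
  set d := cbrt (φ-ψ)
  have hcd : c * d = p := by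
    have h1 : (c*d)^3 = p^3 := by
      have h2 : (c*d)^3 = c^3 * d^3 := by ring
      rw [h2, hc3, hd3, hab]
    nlinarith [mul_pos hcpos hdpos, mul_pos (mul_pos hcpos hdpos) hp,
      sq_nonneg (c*d - p), sq_nonneg (c*d + p)]
  refine ⟨by linarith, ?_, ?_⟩
  · have h3 : (c+d)^3 = c^3 + d^3 + 3*(c*d)*(c+d) := by ring
    rw [h3, hc3, hd3, hcd]; ring
  · nlinarith [sq_nonneg (c - d)]

/-- Abstract monotone comparison via the cubic equation. -/
lemma cubic_mono (p₁ p₂ φ₁ φ₂ u₁ u₂ : ℝ) (hp2 : 0 < p₂) (hp : p₂ ≤ p₁)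
    (hφ : φ₂ ≤ φ₁) (hu1 : 0 < u₁) (hu2 : 0 < u₂)
    (he1 : u₁^3 = 2*φ₁ + 3*p₁*u₁) (he2 : u₂^3 = 2*φ₂ + 3*p₂*u₂)
    (hq1 : 4*p₁ ≤ u₁^2) (hq2 : 4*p₂ ≤ u₂^2) : u₂ ≤ u₁ := by
  by_contra hcon
  push_neg at hcon
  have key : u₂^3 - u₁^3 ≤ 3*p₂*(u₂ - u₁) := by nlinarith
  nlinarith [mul_pos (sub_pos.2 hcon) (mul_pos hu1 hu2),
    mul_pos hu1 hu2, sq_nonneg (u₁ - u₂),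
    mul_lt_mul_of_pos_left hcon hu2, mul_lt_mul_of_pos_left hcon hu1]

/-- `G t = ∛(φ(t)+ψ(t)) + ∛(φ(t)−ψ(t))`. -/
noncomputable def G (t : ℝ) : ℝ :=
  cbrt (Real.sqrt (1 - (9/4)*t^2 + (27/16)*t^4) + (3*Real.sqrt 3/8)*t^3)
  + cbrt (Real.sqrt (1 - (9/4)*t^2 + (27/16)*t^4) - (3*Real.sqrt 3/8)*t^3)

lemma G_facts (t : ℝ) (h0 : 0 ≤ t) (h2 : t^2 ≤ 2/3) :
    0 < G t ∧
    (G t)^3 = 2 * Real.sqrt (1 - (9/4)*t^2 + (27/16)*t^4) + 3*(1-(3/4)*t^2)*(G t) ∧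
    4*(1-(3/4)*t^2) ≤ (G t)^2 := by
  have h3 : Real.sqrt 3 ^ 2 = 3 := Real.sq_sqrt (by norm_num)
  have h3n : (0:ℝ) ≤ Real.sqrt 3 := Real.sqrt_nonneg 3
  have hp : 0 < 1 - (3/4)*t^2 := by nlinarith
  have hψ0 : 0 ≤ (3*Real.sqrt 3/8)*t^3 := by positivity
  have hψsq : ((3*Real.sqrt 3/8)*t^3)^2 = (27/64)*t^6 := by nlinarith
  have hRpos : 0 < 1 - (9/4)*t^2 + (27/16)*t^4 := by nlinarith
  have hφsq : (Real.sqrt (1 - (9/4)*t^2 + (27/16)*t^4))^2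
      = 1 - (9/4)*t^2 + (27/16)*t^4 := Real.sq_sqrt hRpos.le
  have hφpos : 0 < Real.sqrt (1 - (9/4)*t^2 + (27/16)*t^4) := Real.sqrt_pos.2 hRpos
  have hab : (Real.sqrt (1 - (9/4)*t^2 + (27/16)*t^4) + (3*Real.sqrt 3/8)*t^3)
      * (Real.sqrt (1 - (9/4)*t^2 + (27/16)*t^4) - (3*Real.sqrt 3/8)*t^3)
      = (1-(3/4)*t^2)^3 := by nlinarith
  exact cubic_facts _ _ _ hp hψ0 hφpos hab

lemma G_mono {t₁ t₂ : ℝ} (h0 : 0 ≤ t₁) (h12 : t₁ ≤ t₂) (h2 : t₂^2 ≤ 2/3) :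
    G t₂ ≤ G t₁ := by
  have h01 : t₁^2 ≤ 2/3 := by nlinarith
  obtain ⟨hu1, he1, hq1⟩ := G_facts t₁ h0 h01
  obtain ⟨hu2, he2, hq2⟩ := G_facts t₂ (h0.trans h12) h2
  have hφmono : Real.sqrt (1 - (9/4)*t₂^2 + (27/16)*t₂^4)
      ≤ Real.sqrt (1 - (9/4)*t₁^2 + (27/16)*t₁^4) := by
    apply Real.sqrt_le_sqrt
    have ht : t₁^2 ≤ t₂^2 := by nlinarith
    nlinarith [mul_nonneg (sub_nonneg.2 ht)
      (by nlinarith : (0:ℝ) ≤ 9/4 - (27/16)*(t₁^2+t₂^2))]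
  have hpmono : 1 - (3/4)*t₂^2 ≤ 1 - (3/4)*t₁^2 := by nlinarith
  have hp2pos : (0:ℝ) < 1 - (3/4)*t₂^2 := by nlinarith
  exact cubic_mono _ _ _ _ _ _ hp2pos hpmono hφmono hu1 hu2 he1 he2 hq1 hq2

lemma sNorm_pos {k₁ k₂ : ℕ} (hk₁ : 1 ≤ k₁) (hk₂ : 1 ≤ k₂) : 0 < sNorm k₁ k₂ := by
  apply Real.sqrt_pos.2
  have : (1:ℝ) ≤ (k₁:ℝ) := by exact_mod_cast hk₁
  nlinarith [sq_nonneg ((k₂:ℝ))]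

lemma sNorm_sq {k₁ k₂ : ℕ} : (sNorm k₁ k₂)^2 = (k₁:ℝ)^2 + (k₂:ℝ)^2 := by
  apply Real.sq_sqrt
  positivity

lemma sNorm_sq_ge {k₁ k₂ : ℕ} (hk₁ : 1 ≤ k₁) (hk₂ : 1 ≤ k₂) : (2:ℝ) ≤ (sNorm k₁ k₂)^2 := by
  rw [sNorm_sq]
  have h1 : (1:ℝ) ≤ (k₁:ℝ) := by exact_mod_cast hk₁
  have h2 : (1:ℝ) ≤ (k₂:ℝ) := by exact_mod_cast hk₂
  nlinarith

lemma bridge (β : ℝ) (k₁ k₂ : ℕ) (hk₁ : 1 ≤ k₁) (hk₂ : 1 ≤ k₂) :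
    LamP β k₁ k₂ + LamM β k₁ k₂ = (1/2) * G (β / sNorm k₁ k₂) := by
  have hs : 0 < sNorm k₁ k₂ := sNorm_pos hk₁ hk₂
  have hsne : sNorm k₁ k₂ ≠ 0 := hs.ne'
  have hPhi : Phi β k₁ k₂
      = Real.sqrt (1 - (9/4)*(β/sNorm k₁ k₂)^2 + (27/16)*(β/sNorm k₁ k₂)^4) := by
    unfold Phi
    congr 1
    field_simp
  have hPsi : Psi β k₁ k₂ = (3*Real.sqrt 3/8)*(β/sNorm k₁ k₂)^3 := by
    unfold Psi
    field_simp
  unfold LamP LamM G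
  rw [hPhi, hPsi]
  ring

lemma t_sq_le {β : ℝ} (hβ0 : 0 ≤ β) (hβ : β ≤ 2 / Real.sqrt 3) {k₁ k₂ : ℕ}
    (hk₁ : 1 ≤ k₁) (hk₂ : 1 ≤ k₂) : (β / sNorm k₁ k₂)^2 ≤ 2/3 := by
  have hs : 0 < sNorm k₁ k₂ := sNorm_pos hk₁ hk₂
  have hs2 : (2:ℝ) ≤ (sNorm k₁ k₂)^2 := sNorm_sq_ge hk₁ hk₂
  have h3 : Real.sqrt 3 ^ 2 = 3 := Real.sq_sqrt (by norm_num)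
  have h3p : 0 < Real.sqrt 3 := Real.sqrt_pos.2 (by norm_num)
  have hβ2 : β^2 ≤ 4/3 := by
    have h1 : β^2 ≤ (2 / Real.sqrt 3)^2 := by
      apply pow_le_pow_left₀ hβ0 hβ
    have h2 : (2 / Real.sqrt 3)^2 = 4/3 := by
      rw [div_pow, h3]; norm_num
    linarith [h1, h2.le]
  rw [div_pow, div_le_iff₀ (by positivity)]
  nlinarith

theorem stmt7_main (β : ℝ) (hβ0 : 0 ≤ β) (hβ : β ≤ 2 / Real.sqrt 3)
    (k₁ k₂ k₁' k₂' : ℕ) (h1 : 1 ≤ k₁) (h2 : 1 ≤ k₂) (h1' : 1 ≤ k₁') (h2' : 1 ≤ k₂')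
    (hle : k₁' ^ 2 + k₂' ^ 2 ≤ k₁ ^ 2 + k₂ ^ 2) :
    LamP β k₁ k₂ + LamM β k₁ k₂ ≥ LamP β k₁' k₂' + LamM β k₁' k₂' := by
  rw [bridge β k₁ k₂ h1 h2, bridge β k₁' k₂' h1' h2']
  have hs : 0 < sNorm k₁ k₂ := sNorm_pos h1 h2
  have hs' : 0 < sNorm k₁' k₂' := sNorm_pos h1' h2'
  have hss : sNorm k₁' k₂' ≤ sNorm k₁ k₂ := by
    apply Real.sqrt_le_sqrt
    have : ((k₁':ℝ)^2 + (k₂':ℝ)^2) ≤ (k₁:ℝ)^2 + (k₂:ℝ)^2 := by exact_mod_cast hle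
    linarith
  have ht : β / sNorm k₁ k₂ ≤ β / sNorm k₁' k₂' := by
    apply div_le_div_of_nonneg_left hβ0 hs' hss
  have hG := G_mono (div_nonneg hβ0 hs.le) ht
    (t_sq_le hβ0 hβ h1' h2')
  linarith

/-- monotonicity and positivity of `Λ⁺ + Λ⁻` when `β ∈ [0, 2/√3]`. -/
theorem stmt_7 (β : ℝ) (hβ0 : 0 ≤ β) (hβ : β ≤ 2 / Real.sqrt 3) :
    (∀ k₁ k₂ : ℕ, 1 ≤ k₁ → 1 ≤ k₂ →
      LamP β k₁ k₂ + LamM β k₁ k₂ ≥ LamP β 1 1 + LamM β 1 1) ∧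
    (0 < LamP β 1 1 + LamM β 1 1) ∧
    (∀ k₁ k₂ k₁' k₂' : ℕ, 1 ≤ k₁ → 1 ≤ k₂ → 1 ≤ k₁' → 1 ≤ k₂' →
      k₁' ^ 2 + k₂' ^ 2 ≤ k₁ ^ 2 + k₂ ^ 2 →
      LamP β k₁ k₂ + LamM β k₁ k₂ ≥ LamP β k₁' k₂' + LamM β k₁' k₂') := by
  refine ⟨?_, ?_, ?_⟩
  · intro k₁ k₂ hk₁ hk₂
    exact stmt7_main β hβ0 hβ k₁ k₂ 1 1 hk₁ hk₂ le_rfl le_rfl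
      (by nlinarith [Nat.one_le_iff_ne_zero.1 hk₁, hk₁, hk₂])
  · rw [bridge β 1 1 le_rfl le_rfl]
    have hs : 0 < sNorm 1 1 := sNorm_pos le_rfl le_rfl
    have := (G_facts (β / sNorm 1 1) (div_nonneg hβ0 hs.le)
      (t_sq_le hβ0 hβ le_rfl le_rfl)).1
    linarith
  · intro k₁ k₂ k₁' k₂' h1 h2 h1' h2' hle
    exact stmt7_main β hβ0 hβ k₁ k₂ k₁' k₂' h1 h2 h1' h2' hle
end
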